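/- In the ICW model, the error term R_2 := (√n/√χ_n)·(1/n)∑_i [tanh(t_i*) − tanh((β w_i/E[W_n])·m̃_n + h)] + c·X̃_n satisfies E_{μ_n}[|R_2|] ≤ (χ̃_n/√χ_n)·(β/E[W_n])²·E[W_n²]·E_{μ_n}[X̃_n²]·n^{−1/2}. -/

import Mathlib

/-!
Expand `tanh` to first order around each `t_i* = (β w_i / E[W_n]) M̃_n + h`. Since `tanh' = 1 - tanh²`
is `1`-Lipschitz, the remainder at `(β w_i / E[W_n]) m̃_n + h` is at most `(β w_i / E[W_n])² (m̃_n - M̃_n)²`.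
Summed over `i`, the first-order terms are exactly `-c X̃_n`, so `R_2` is `-√n / √χ_n` times the
average remainder; averaging the bound gives `(β / E[W_n])² E[W_n²] (m̃_n - M̃_n)²`, and
`(m̃_n - M̃_n)² = χ̃_n X̃_n² / n`.
-/

open Real BigOperators Finset MeasureTheory Filter ProbabilityTheory Topology

noncomputable section

namespace ICW

/-- The real spin value associated to a Boolean: `true ↦ 1`, `false ↦ -1`. -/
def spin (b : Bool) : ℝ := if b then 1 else -1

/-- `E[W_n^k] = (1/n) ∑_i w_i^k`. -/
def EWk (n : ℕ) (w : Fin n → ℝ) (k : ℕ) : ℝ := (1 / n : ℝ) * ∑ i, (w i) ^ k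

/-- `E[W_n] = (1/n) ∑_i w_i`. -/
def EW (n : ℕ) (w : Fin n → ℝ) : ℝ := (1 / n : ℝ) * ∑ i, w i

/-- The (negative) Hamiltonian of the inhomogeneous Curie–Weiss model. -/
def ham (n : ℕ) (w : Fin n → ℝ) (β h : ℝ) (σ : Fin n → Bool) : ℝ :=
  β / (2 * ∑ i, w i) * (∑ i, w i * spin (σ i)) ^ 2 + h * ∑ i, spin (σ i)

/-- Unnormalized Boltzmann–Gibbs weight. -/
def wt (n : ℕ) (w : Fin n → ℝ) (β h : ℝ) (σ : Fin n → Bool) : ℝ :=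
  Real.exp (ham n w β h σ)

/-- Partition function `Z_n`. -/
def Z (n : ℕ) (w : Fin n → ℝ) (β h : ℝ) : ℝ := ∑ σ : Fin n → Bool, wt n w β h σ

/-- Expectation under the ICW measure `μ_n`. -/
def icwE (n : ℕ) (w : Fin n → ℝ) (β h : ℝ) (f : (Fin n → Bool) → ℝ) : ℝ :=
  (∑ σ : Fin n → Bool, wt n w β h σ * f σ) / Z n w β h

open Classical in
/-- Probability of an event under the ICW measure `μ_n`. -/
def icwP (n : ℕ) (w : Fin n → ℝ) (β h : ℝ) (A : (Fin n → Bool) → Prop) : ℝ :=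
  icwE n w β h (fun σ => if A σ then 1 else 0)

/-- Magnetization `m_n`. -/
def mn (n : ℕ) (σ : Fin n → Bool) : ℝ := (1 / n : ℝ) * ∑ i, spin (σ i)

/-- Weighted magnetization `m̃_n`. -/
def mtil (n : ℕ) (w : Fin n → ℝ) (σ : Fin n → Bool) : ℝ :=
  (1 / n : ℝ) * ∑ i, w i * spin (σ i)

/-- Weighted magnetization leaving out spin `i`, `m̃_n^i`. -/
def mtilI (n : ℕ) (w : Fin n → ℝ) (σ : Fin n → Bool) (i : Fin n) : ℝ :=
  (1 / n : ℝ) * ∑ j ∈ Finset.univ.erase i, w j * spin (σ j)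

/-- Argument `√(β/E[W_n])·w_i·x + h`. -/
def arg (n : ℕ) (w : Fin n → ℝ) (β h x : ℝ) (i : Fin n) : ℝ :=
  Real.sqrt (β / EW n w) * w i * x + h

/-- `G_n(x)`. -/
def Gfun (n : ℕ) (w : Fin n → ℝ) (β h : ℝ) (x : ℝ) : ℝ :=
  x ^ 2 / 2 - (1 / n : ℝ) * ∑ i, Real.log (Real.cosh (arg n w β h x i))

/-- `G_n(x; s)` (with tilted argument `x+s`). -/
def GfunS (n : ℕ) (w : Fin n → ℝ) (β h : ℝ) (x s : ℝ) : ℝ :=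
  x ^ 2 / 2 - (1 / n : ℝ) * ∑ i, Real.log (Real.cosh (arg n w β h (x + s) i))

/-- `G_n'(x)`. -/
def Gfun' (n : ℕ) (w : Fin n → ℝ) (β h : ℝ) (x : ℝ) : ℝ :=
  x - (1 / n : ℝ) * ∑ i, Real.sqrt (β / EW n w) * w i * Real.tanh (arg n w β h x i)

/-- `G_n''(x)`. -/
def Gfun'' (n : ℕ) (w : Fin n → ℝ) (β h : ℝ) (x : ℝ) : ℝ :=
  1 - β / EW n w * ((1 / n : ℝ) * ∑ i, (1 - Real.tanh (arg n w β h x i) ^ 2) * (w i) ^ 2)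

/-- `x` has the same sign as `h` (and is `0` when `h = 0`). -/
def SameSign (h x : ℝ) : Prop :=
  (0 < h ∧ 0 < x) ∨ (h < 0 ∧ x < 0) ∨ (h = 0 ∧ x = 0)

/-- `M_n`, defined from a solution `x` of the fixed point equation. -/
def Mn (n : ℕ) (w : Fin n → ℝ) (β h x : ℝ) : ℝ :=
  (1 / n : ℝ) * ∑ i, Real.tanh (arg n w β h x i)

/-- The susceptibility `χ_n`, defined from a solution `x` of the fixed point equation. -/
def chiN (n : ℕ) (w : Fin n → ℝ) (β h x : ℝ) : ℝ :=
  1 - (1 / n : ℝ) * ∑ i, Real.tanh (arg n w β h x i) ^ 2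
    + β / EW n w * ((1 / n : ℝ) * ∑ i, (1 - Real.tanh (arg n w β h x i) ^ 2) * w i) ^ 2
      / Gfun'' n w β h x

/-- `M̃_n`. -/
def Mtil (n : ℕ) (w : Fin n → ℝ) (β x : ℝ) : ℝ := Real.sqrt (EW n w / β) * x

/-- `χ̃_n`. -/
def chiTil (n : ℕ) (w : Fin n → ℝ) (β h x : ℝ) : ℝ :=
  ((1 / n : ℝ) * ∑ i, (1 - Real.tanh (arg n w β h x i) ^ 2) * (w i) ^ 2) / Gfun'' n w β h x

/-- The normalized magnetization `X_n` (as a function of the configuration),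
where `x` is the relevant solution of the fixed point equation. -/
def Xn (n : ℕ) (w : Fin n → ℝ) (β h x : ℝ) (σ : Fin n → Bool) : ℝ :=
  Real.sqrt n * (mn n σ - Mn n w β h x) / Real.sqrt (chiN n w β h x)

/-- The normalized weighted magnetization `X̃_n`. -/
def Xtil (n : ℕ) (w : Fin n → ℝ) (β h x : ℝ) (σ : Fin n → Bool) : ℝ :=
  Real.sqrt n * (mtil n w σ - Mtil n w β x) / Real.sqrt (chiTil n w β h x)

/-- The standard normal cumulative distribution function. -/
def stdGaussCDF (z : ℝ) : ℝ := ((gaussianReal 0 1) (Set.Iic z)).toReal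

/-- Kolmogorov distance between the law of `X` under `μ_n` and the standard normal law. -/
def dK (n : ℕ) (w : Fin n → ℝ) (β h : ℝ) (X : (Fin n → Bool) → ℝ) : ℝ :=
  ⨆ z : ℝ, |icwP n w β h (fun σ => X σ ≤ z) - stdGaussCDF z|

/-- Weight regularity condition (i): the empirical weight distribution converges weakly to
the law `ν` of `W`, which is a probability measure with `E[W] > 0`. -/
def WeightRegI (w : (n : ℕ) → Fin n → ℝ) (ν : Measure ℝ) : Prop :=
  (∀ n i, 0 < w n i) ∧ IsProbabilityMeasure ν ∧
    (∀ f : BoundedContinuousFunction ℝ ℝ,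
      Tendsto (fun n : ℕ => (1 / n : ℝ) * ∑ i, f (w n i)) atTop (𝓝 (∫ x, f x ∂ν))) ∧
    Integrable (fun x => x) ν ∧ 0 < ∫ x, x ∂ν

/-- Weight regularity condition (ii): `E[W_n²] → E[W²] < ∞`. -/
def WeightRegII (w : (n : ℕ) → Fin n → ℝ) (ν : Measure ℝ) : Prop :=
  Integrable (fun x => x ^ 2) ν ∧
    Tendsto (fun n => EWk n (w n) 2) atTop (𝓝 (∫ x, x ^ 2 ∂ν))

/-- Weight regularity condition (iii): `E[W_n³] → E[W³] < ∞`. -/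
def WeightRegIII (w : (n : ℕ) → Fin n → ℝ) (ν : Measure ℝ) : Prop :=
  Integrable (fun x => x ^ 3) ν ∧
    Tendsto (fun n => EWk n (w n) 3) atTop (𝓝 (∫ x, x ^ 3 ∂ν))

/-- The critical inverse temperature `β_c = E[W]/E[W²]`. -/
def betaC (ν : Measure ℝ) : ℝ := (∫ x, x ∂ν) / (∫ x, x ^ 2 ∂ν)

/-- The uniqueness regime `U`. -/
def Uniq (ν : Measure ℝ) (β h : ℝ) : Prop :=
  (0 ≤ β ∧ h ≠ 0) ∨ (0 < β ∧ β < betaC ν ∧ h = 0)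

/-- Probability that spin `i` equals `+1` given the remaining spins. -/
def pPlus (n : ℕ) (w : Fin n → ℝ) (β h : ℝ) (σ : Fin n → Bool) (i : Fin n) : ℝ :=
  wt n w β h (Function.update σ i true) /
    (wt n w β h (Function.update σ i true) + wt n w β h (Function.update σ i false))

/-- Conditional expectation given `F_n` (the σ-algebra generated by `σ`) of a function of
`(σ, I, σ'_I)`, where `I` is uniform on `[n]` and `σ'_I` is resampled from the conditional
distribution of the `I`-th spin given the others. -/
def condAvg (n : ℕ) (w : Fin n → ℝ) (β h : ℝ)
    (f : (Fin n → Bool) → Fin n → Bool → ℝ) (σ : Fin n → Bool) : ℝ :=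
  (1 / n : ℝ) * ∑ i, (pPlus n w β h σ i * f σ i true + (1 - pPlus n w β h σ i) * f σ i false)

/-- The increment `X_n − X'_n` as a function of `(σ, I, σ'_I)`. -/
def XnD (n : ℕ) (w : Fin n → ℝ) (β h x : ℝ) (σ : Fin n → Bool) (i : Fin n) (b : Bool) : ℝ :=
  (spin (σ i) - spin b) / (Real.sqrt n * Real.sqrt (chiN n w β h x))

/-- The increment `X̃_n − X̃'_n` as a function of `(σ, I, σ'_I)`. -/
def XtilD (n : ℕ) (w : Fin n → ℝ) (β h x : ℝ) (σ : Fin n → Bool) (i : Fin n) (b : Bool) : ℝ :=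
  w i * (spin (σ i) - spin b) / (Real.sqrt n * Real.sqrt (chiTil n w β h x))

/-- The constant `c` in the regression equation. -/
def cconst (n : ℕ) (w : Fin n → ℝ) (β h x : ℝ) : ℝ :=
  Real.sqrt (chiTil n w β h x) / Real.sqrt (chiN n w β h x) * (β / EW n w) *
    ((1 / n : ℝ) * ∑ i, (1 - Real.tanh (arg n w β h x i) ^ 2) * w i)

end ICW

namespace ICW

/-- Error term `R_2`. -/
def R2 (n : ℕ) (w : Fin n → ℝ) (β h x : ℝ) (σ : Fin n → Bool) : ℝ :=
  Real.sqrt n / Real.sqrt (chiN n w β h x) *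
    ((1 / n : ℝ) * ∑ i, (Real.tanh (arg n w β h x i)
      - Real.tanh (β * w i / EW n w * mtil n w σ + h)))
  + cconst n w β h x * Xtil n w β h x σ

end ICW

theorem norm_image_sub_sub_smul_le_of_lipschitzWith {E : Type*} [NormedAddCommGroup E]
    [NormedSpace ℝ E] {f f' : ℝ → E} {K : NNReal} (hf : ∀ t, HasDerivAt f (f' t) t)
    (hf' : LipschitzWith K f') (a b : ℝ) :
    ‖f b - f a - (b - a) • f' a‖ ≤ K * (b - a) ^ 2 := by
  have hg : ∀ t ∈ Set.uIcc a b,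
      HasDerivWithinAt (fun s => f s - s • f' a) (f' t - f' a) (Set.uIcc a b) t := fun t _ =>
    ((hf t).sub (hasDerivAt_id t |>.smul_const (f' a))).hasDerivWithinAt.congr_deriv
      (by simp)
  have hbound : ∀ t ∈ Set.uIcc a b, ‖f' t - f' a‖ ≤ K * |b - a| := fun t ht =>
    (hf'.norm_sub_le t a).trans <| by
      rw [Real.norm_eq_abs]; exact mul_le_mul_of_nonneg_left (Set.abs_sub_left_of_mem_uIcc ht) K.2
  have := (convex_uIcc a b).norm_image_sub_le_of_norm_hasDerivWithin_le hg hbound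
    Set.left_mem_uIcc Set.right_mem_uIcc
  rw [Real.norm_eq_abs, mul_assoc, ← sq, sq_abs] at this
  convert this using 2
  rw [sub_smul]; abel

namespace Real

theorem hasDerivAt_tanh (x : ℝ) : HasDerivAt tanh (1 - tanh x ^ 2) x := by
  have h := (hasDerivAt_sinh x).div (hasDerivAt_cosh x) (cosh_pos x).ne'
  rw [show sinh / cosh = tanh from funext fun y => (tanh_eq_sinh_div_cosh y).symm] at h
  refine h.congr_deriv ?_
  rw [tanh_eq_sinh_div_cosh]
  field_simp

theorem lipschitzWith_one_sub_tanh_sq : LipschitzWith 1 fun x => 1 - tanh x ^ 2 := by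
  refine lipschitzOnWith_univ.1 <| convex_univ.lipschitzOnWith_of_nnnorm_hasDerivWithin_le
    (f' := fun x => -(2 * tanh x * (1 - tanh x ^ 2))) (fun x _ => ?_) fun x _ => ?_
  · exact ((hasDerivAt_const x 1).sub ((hasDerivAt_tanh x).pow 2)).hasDerivWithinAt.congr_deriv
      (by ring)
  · rw [← NNReal.coe_le_coe, coe_nnnorm, norm_neg, Real.norm_eq_abs, NNReal.coe_one, abs_le]
    have := neg_one_lt_tanh x
    have := tanh_lt_one x
    constructor <;> nlinarith [sq_nonneg (tanh x - 1 / 2), sq_nonneg (tanh x + 1 / 2)]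

theorem abs_tanh_sub_sub_le (a b : ℝ) :
    |tanh b - tanh a - (1 - tanh a ^ 2) * (b - a)| ≤ (b - a) ^ 2 := by
  simpa [mul_comm] using
    norm_image_sub_sub_smul_le_of_lipschitzWith hasDerivAt_tanh lipschitzWith_one_sub_tanh_sq a b

end Real

namespace ICW

section

variable {n : ℕ} {w : Fin n → ℝ} {β h x : ℝ}

theorem icwE_mono {f g : (Fin n → Bool) → ℝ} (hfg : ∀ σ, f σ ≤ g σ) :
    icwE n w β h f ≤ icwE n w β h g :=
  div_le_div_of_nonneg_right
    (sum_le_sum fun σ _ => mul_le_mul_of_nonneg_left (hfg σ) (exp_pos _).le)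
    (sum_nonneg fun _ _ => (exp_pos _).le)

theorem icwE_const_mul (c : ℝ) (f : (Fin n → Bool) → ℝ) :
    icwE n w β h (fun σ => c * f σ) = c * icwE n w β h f := by
  simp only [icwE, mul_left_comm _ c, ← Finset.mul_sum, mul_div_assoc]

theorem arg_eq_mul_Mtil_add (i : Fin n) :
    arg n w β h x i = β * w i / EW n w * Mtil n w β x + h := by
  have hsqrt : √(β / EW n w) = β / EW n w * √(EW n w / β) := by
    rw [← inv_div β, sqrt_inv, ← div_eq_mul_inv, div_sqrt]
  rw [arg, Mtil, hsqrt]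
  ring

theorem chiTil_pos (hn : 0 < n) (hw : ∀ i, 0 < w i) (hG'' : 0 < Gfun'' n w β h x) :
    0 < chiTil n w β h x := by
  refine div_pos (mul_pos (by positivity) (sum_pos (fun i _ => ?_) ?_)) hG''
  · exact mul_pos (sub_pos.2 (tanh_sq_lt_one _)) (pow_pos (hw i) 2)
  · exact univ_nonempty_iff.2 ⟨⟨0, hn⟩⟩

theorem R2_eq_neg_sum_tanh_remainder (hχ : 0 < chiTil n w β h x) (σ : Fin n → Bool) :
    R2 n w β h x σ = -(√n / √(chiN n w β h x) * ((1 / n : ℝ) * ∑ i,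
      (tanh (β * w i / EW n w * mtil n w σ + h) - tanh (arg n w β h x i)
        - (1 - tanh (arg n w β h x i) ^ 2) *
          (β * w i / EW n w * mtil n w σ + h - arg n w β h x i)))) := by
  set S := ∑ i, (tanh (β * w i / EW n w * mtil n w σ + h) - tanh (arg n w β h x i)
    - (1 - tanh (arg n w β h x i) ^ 2) * (β * w i / EW n w * mtil n w σ + h - arg n w β h x i))
    with hS
  set T := ∑ i, (1 - tanh (arg n w β h x i) ^ 2) * w i with hT
  have hsum : ∑ i, (tanh (arg n w β h x i) - tanh (β * w i / EW n w * mtil n w σ + h))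
      = -S - β / EW n w * (mtil n w σ - Mtil n w β x) * T := by
    rw [hS, hT, Finset.mul_sum, ← sum_neg_distrib, ← sum_sub_distrib]
    refine sum_congr rfl fun i _ => ?_
    rw [arg_eq_mul_Mtil_add]
    ring
  have hsqrt : √(chiTil n w β h x) ≠ 0 := (sqrt_pos.2 hχ).ne'
  rw [R2, cconst, Xtil, hsum]
  field_simp
  ring

theorem abs_R2_le (hχ : 0 < chiTil n w β h x) (σ : Fin n → Bool) :
    |R2 n w β h x σ| ≤ √n / √(chiN n w β h x) *
      ((β / EW n w) ^ 2 * EWk n w 2 * (mtil n w σ - Mtil n w β x) ^ 2) := by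
  rw [R2_eq_neg_sum_tanh_remainder hχ, abs_neg, abs_mul, abs_of_nonneg (by positivity)]
  gcongr
  calc _ ≤ (1 / n : ℝ) * ∑ i, (β * w i / EW n w * (mtil n w σ - Mtil n w β x)) ^ 2 := by
        rw [abs_mul, abs_of_nonneg (by positivity)]
        gcongr
        refine (abs_sum_le_sum_abs _ _).trans (sum_le_sum fun i _ => ?_)
        have hdiff : β * w i / EW n w * mtil n w σ + h - arg n w β h x i
            = β * w i / EW n w * (mtil n w σ - Mtil n w β x) := by
          rw [arg_eq_mul_Mtil_add]
          ring
        rw [← hdiff]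
        exact abs_tanh_sub_sub_le _ _
    _ = _ := by
        simp only [EWk, mul_sum, sum_mul]
        exact sum_congr rfl fun i _ => by ring

theorem sq_mtil_sub_Mtil (hn : 0 < n) (hχ : 0 < chiTil n w β h x) (σ : Fin n → Bool) :
    (mtil n w σ - Mtil n w β x) ^ 2 = chiTil n w β h x * Xtil n w β h x σ ^ 2 / n := by
  rw [Xtil, div_pow, mul_pow, sq_sqrt (Nat.cast_nonneg n), sq_sqrt hχ.le]
  field_simp

theorem abs_R2_le_mul_Xtil_sq (hn : 0 < n) (hχ : 0 < chiTil n w β h x) (σ : Fin n → Bool) :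
    |R2 n w β h x σ| ≤ chiTil n w β h x / √(chiN n w β h x) * (β / EW n w) ^ 2 * EWk n w 2 /
      √n * Xtil n w β h x σ ^ 2 := by
  have hsqrt : (0 : ℝ) < √n := sqrt_pos.2 (Nat.cast_pos.2 hn)
  refine (abs_R2_le hχ σ).trans_eq ?_
  rw [sq_mtil_sub_Mtil hn hχ]
  field_simp
  rw [sq_sqrt (Nat.cast_nonneg n)]
  ring

end

theorem R2_bound_general (n : ℕ) (hn : 0 < n) (w : Fin n → ℝ) (hw : ∀ i, 0 < w i)
    (β h : ℝ) (x : ℝ) (hG'' : 0 < Gfun'' n w β h x) :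
    icwE n w β h (fun σ => |R2 n w β h x σ|)
      ≤ chiTil n w β h x / Real.sqrt (chiN n w β h x) * (β / EW n w) ^ 2 * EWk n w 2 *
          icwE n w β h (fun σ => Xtil n w β h x σ ^ 2) / Real.sqrt n := by
  calc _ ≤ _ := icwE_mono (abs_R2_le_mul_Xtil_sq hn (chiTil_pos hn hw hG''))
    _ = _ := by rw [icwE_const_mul]; ring

/-- **Bound on the error term `R_2`**:
`E[|R_2|] ≤ (χ̃_n/√χ_n)·(β/E[W_n])²·E[W_n²]·E[X̃_n²]·n^{−1/2}`. -/
theorem R2_bound (n : ℕ) (hn : 0 < n) (w : Fin n → ℝ) (hw : ∀ i, 0 < w i)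
    (β h : ℝ) (hβ : 0 < β) (x : ℝ) (hx : Gfun' n w β h x = 0) (hsign : SameSign h x)
    (hG'' : 0 < Gfun'' n w β h x) :
    icwE n w β h (fun σ => |R2 n w β h x σ|)
      ≤ chiTil n w β h x / Real.sqrt (chiN n w β h x) * (β / EW n w) ^ 2 * EWk n w 2 *
          icwE n w β h (fun σ => Xtil n w β h x σ ^ 2) / Real.sqrt n :=
  R2_bound_general n hn w hw β h x hG''

end ICW
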